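/- arXiv:1409.8334 — 2 statements merged into one kernel-verified Lean document; each statement's English description precedes it below -/
import Mathlib

section
/- Let X be a set decomposed as a finite disjoint union X = X_1 ⊔ ... ⊔ X_n of nonempty subsets, and let f : X → X be an injective map such that for every integer m ≥ 0 and all i, j ∈ {1,...,n}, the set f^m(X_i) is either disjoint from X_j, contained in X_j, or contains X_j. Then there exists an index i ∈ {1,...,n} and an integer m > 0 such that f^m(X_i) ⊆ X_i. -/
/-!
Pigeonholing the blocks visited by an orbit gives a block `X j` and `m > 0` with
`f^m(X j)` meeting `X j`; by the trichotomy either `f^m(X j) ⊆ X j`, or `X j ⊆ g(X j)` for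
`g = f^m`. In the second case, if no iterate of `g` maps `X j` into itself, every
`g^k(X j)` with `k ≥ 1` is a union of blocks, so two of them coincide, and injectivity of `g`
turns `g^k(X j) = g^l(X j)` with `k < l` into `X j = g^(l-k)(X j)`.
-/

open Set Function

section

variable {α ι : Type*} {X : ι → Set α}

theorem exists_iterate_image_inter_nonempty [Finite ι] [Nonempty α] (hcover : ⋃ i, X i = univ)
    (f : α → α) : ∃ j m, 0 < m ∧ (f^[m] '' X j ∩ X j).Nonempty := by
  obtain ⟨x⟩ := ‹Nonempty α›
  choose P hP using fun k => iUnion_eq_univ_iff.mp hcover (f^[k] x)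
  obtain ⟨k, l, hkl, hPkl⟩ :=
    finite_univ.exists_lt_map_eq_of_forall_mem (f := P) (fun _ => mem_univ _)
  refine ⟨P l, l - k, Nat.sub_pos_of_lt hkl, f^[l] x, ⟨f^[k] x, hPkl ▸ hP k, ?_⟩, hP l⟩
  rw [← iterate_add_apply, Nat.sub_add_cancel hkl.le]

def IsSaturated (X : ι → Set α) (A : Set α) : Prop :=
  ∀ i, (A ∩ X i).Nonempty → X i ⊆ A

theorem finite_setOf_isSaturated [Finite ι] (hcover : ⋃ i, X i = univ) :
    {A : Set α | IsSaturated X A}.Finite := by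
  refine Finite.of_finite_image (f := fun A => {i | X i ⊆ A}) (toFinite _) ?_
  have key : ∀ A B : Set α, IsSaturated X A →
      {i | X i ⊆ A} = {i | X i ⊆ B} → A ⊆ B := by
    intro A B hA hAB x hx
    obtain ⟨i, hi⟩ := iUnion_eq_univ_iff.mp hcover x
    have hiB : i ∈ {i | X i ⊆ B} := hAB ▸ hA i ⟨x, hx, hi⟩
    exact hiB hi
  exact fun A hA B hB hAB => (key A B hA hAB).antisymm (key B A hB hAB.symm)

theorem exists_iterate_image_subset_of_subset_image [Finite ι] {g : α → α} (hg : Injective g)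
    {j : ι} (hne : (X j).Nonempty) (hdisj : Pairwise (Disjoint on X)) (hcover : ⋃ i, X i = univ)
    (htri : ∀ k p, g^[k] '' X j ∩ X p = ∅ ∨ g^[k] '' X j ⊆ X p ∨ X p ⊆ g^[k] '' X j)
    (hexp : X j ⊆ g '' X j) : ∃ l, 0 < l ∧ g^[l] '' X j ⊆ X j := by
  by_contra! hret
  have hgrow : ∀ k, X j ⊆ g^[k] '' X j := by
    intro k
    induction k with
    | zero => simp
    | succ k ih =>
      rw [iterate_succ', image_comp]
      exact hexp.trans (image_mono ih)
  have hsat : ∀ k, IsSaturated X (g^[k + 1] '' X j) := by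
    intro k p hmeet
    rcases htri (k + 1) p with hempty | hinto | honto
    · exact absurd hempty hmeet.ne_empty
    · have hjp : j = p := by
        by_contra hjp
        obtain ⟨x, hx⟩ := hne
        exact disjoint_left.mp (hdisj hjp) hx (hinto (hgrow _ hx))
      exact absurd (hjp ▸ hinto) (hret (k + 1) k.succ_pos)
    · exact honto
  obtain ⟨k, l, hkl, heq⟩ := (finite_setOf_isSaturated hcover).exists_lt_map_eq_of_forall_mem hsat
  rw [show l + 1 = (k + 1) + (l - k) by omega, iterate_add g (k + 1), image_comp] at heq
  have hcycle : g^[l - k] '' X j = X j := image_injective.mpr (hg.iterate (k + 1)) heq.symm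
  exact hret (l - k) (Nat.sub_pos_of_lt hkl) hcycle.le

end

theorem combinatorial_part_i {α : Type*} (n : ℕ) (hn : 0 < n) (X : Fin n → Set α)
    (hne : ∀ i, (X i).Nonempty)
    (hdisj : ∀ i j, i ≠ j → Disjoint (X i) (X j))
    (hunion : (⋃ i, X i) = Set.univ)
    (f : α → α) (hf : Function.Injective f)
    (htri : ∀ (m : ℕ) (i j : Fin n),
      f^[m] '' X i ∩ X j = ∅ ∨ f^[m] '' X i ⊆ X j ∨ X j ⊆ f^[m] '' X i) :
    ∃ (i : Fin n) (m : ℕ), 0 < m ∧ f^[m] '' X i ⊆ X i := by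
  have : Nonempty α := (hne ⟨0, hn⟩).nonempty
  obtain ⟨j, m, hm, hmeet⟩ := exists_iterate_image_inter_nonempty hunion f
  rcases htri m j j with hempty | hinto | hexp
  · exact absurd hempty hmeet.ne_empty
  · exact ⟨j, m, hm, hinto⟩
  · obtain ⟨l, hl, hret⟩ := exists_iterate_image_subset_of_subset_image (hf.iterate m) (hne j)
      (fun i j hij => hdisj i j hij) hunion (fun k p => iterate_mul f m k ▸ htri (m * k) j p) hexp
    exact ⟨j, m * l, Nat.mul_pos hm hl, by rwa [iterate_mul]⟩
end

section
/- Let X be a set decomposed as a finite disjoint union X = X_1 ⊔ ... ⊔ X_n of nonempty subsets, and let f : X → X be an injective but not surjective map such that for every integer m ≥ 0 and all i, j ∈ {1,...,n}, the set f^m(X_i) is either disjoint from X_j, contained in X_j, or contains X_j. Then there exists an index i ∈ {1,...,n} and an integer m > 0 such that f^m(X_i) is a proper subset of X_i. -/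
/-!
Suppose no positive iterate maps a block `X j` onto a proper subset of itself. Then, by the
trichotomy, as soon as `f^[t] '' X j` meets `X j` (with `t > 0`) it covers `X j`, and iterating
puts `X j` inside the range of every iterate of `f`. The pattern of inclusions between the sets
`f^[m] '' X i` and the blocks `X j` takes only finitely many values, so it repeats at two times
`m < n`. Comparing these two times block by block gives `range f^[m] ⊆ range f^[n]`, which for an
injective `f` forces `f` to be surjective.
-/

open Function Set

namespace Function

variable {α : Type*} {f : α → α}

theorem range_iterate_subset_of_le {m n : ℕ} (h : m ≤ n) : range f^[n] ⊆ range f^[m] := by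
  obtain ⟨k, rfl⟩ := Nat.exists_eq_add_of_le h
  rw [iterate_add]
  exact range_comp_subset_range _ _

theorem Injective.surjective_of_range_iterate_subset (hf : Injective f) {m n : ℕ} (hmn : m < n)
    (h : range f^[m] ⊆ range f^[n]) : Surjective f := by
  intro a
  obtain ⟨z, hz⟩ := h (mem_range_self a)
  obtain ⟨k, rfl⟩ := Nat.exists_eq_add_of_lt hmn
  refine ⟨f^[k] z, hf.iterate m ?_⟩
  rwa [← iterate_succ_apply' f k z, ← iterate_add_apply]

theorem subset_range_iterate_of_subset_image_iterate {s : Set α} {t : ℕ} (ht : 0 < t)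
    (h : s ⊆ f^[t] '' s) (n : ℕ) : s ⊆ range f^[n] :=
  calc s ⊆ (f^[t])^[n] '' s := SurjOn.iterate h n
    _ ⊆ range f^[t * n] := by rw [← iterate_mul]; exact image_subset_range _ _
    _ ⊆ range f^[n] := range_iterate_subset_of_le (Nat.le_mul_of_pos_left n ht)

end Function

section ImagesNested

variable {ι α : Type*} {f : α → α} {X : ι → Set α}

def ImagesNested (f : α → α) (X : ι → Set α) : Prop :=
  ∀ (m : ℕ) (i j : ι), f^[m] '' X i ∩ X j = ∅ ∨ f^[m] '' X i ⊆ X j ∨ X j ⊆ f^[m] '' X i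

def imagePattern (f : α → α) (X : ι → Set α) (m : ℕ) (i j : ι) : Prop × Prop :=
  (f^[m] '' X i ⊆ X j, X j ⊆ f^[m] '' X i)

theorem ImagesNested.subset_image_iterate_self (htri : ImagesNested f X) {t : ℕ} {j : ι}
    (hj : ¬ f^[t] '' X j ⊂ X j) (hmeet : (f^[t] '' X j ∩ X j).Nonempty) :
    X j ⊆ f^[t] '' X j := by
  rcases htri t j j with hdisj | hsub | hsup
  · exact absurd hdisj hmeet.ne_empty
  · exact (eq_of_subset_of_not_ssubset hsub hj).ge
  · exact hsup

theorem ImagesNested.range_iterate_subset_of_imagePattern_eq (htri : ImagesNested f X)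
    (hcover : ∀ x, ∃ i, x ∈ X i) (hself : ∀ i t, 0 < t → ¬ f^[t] '' X i ⊂ X i) {m n : ℕ}
    (hmn : m < n) (hpat : imagePattern f X m = imagePattern f X n) :
    range f^[m] ⊆ range f^[n] := by
  rintro _ ⟨x, rfl⟩
  obtain ⟨i, hxi⟩ := hcover x
  obtain ⟨j, hxj⟩ := hcover (f^[m] x)
  have hpat_ij := congrFun (congrFun hpat i) j
  simp only [imagePattern, Prod.mk.injEq] at hpat_ij
  rcases htri m i j with hdisj | hsub | hsup
  · exact absurd hdisj (nonempty_of_mem (mem_inter (mem_image_of_mem _ hxi) hxj)).ne_empty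
  · have ht : 0 < n - m := Nat.sub_pos_of_lt hmn
    have hfn : f^[n - m] (f^[m] x) = f^[n] x := by
      rw [← iterate_add_apply, Nat.sub_add_cancel hmn.le]
    have hmeet : (f^[n - m] '' X j ∩ X j).Nonempty :=
      ⟨f^[n] x, ⟨_, hxj, hfn⟩, (hpat_ij.1 ▸ hsub) (mem_image_of_mem _ hxi)⟩
    exact subset_range_iterate_of_subset_image_iterate ht
      (htri.subset_image_iterate_self (hself j _ ht) hmeet) n hxj
  · exact image_subset_range _ _ ((hpat_ij.2 ▸ hsup) hxj)

end ImagesNested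

theorem combinatorial_part_ii_general {α : Type*} (n : ℕ) (X : Fin n → Set α)
    (hunion : (⋃ i, X i) = Set.univ)
    (f : α → α) (hf : Function.Injective f) (hns : ¬ Function.Surjective f)
    (htri : ∀ (m : ℕ) (i j : Fin n),
      f^[m] '' X i ∩ X j = ∅ ∨ f^[m] '' X i ⊆ X j ∨ X j ⊆ f^[m] '' X i) :
    ∃ (i : Fin n) (m : ℕ), 0 < m ∧ f^[m] '' X i ⊂ X i := by
  by_contra! hself
  have hcover : ∀ x, ∃ i, x ∈ X i := fun x => mem_iUnion.mp (hunion ▸ mem_univ x)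
  obtain ⟨m₁, m₂, hlt, hpat⟩ :=
    finite_univ.exists_lt_map_eq_of_forall_mem (f := imagePattern f X) fun _ => mem_univ _
  have htri : ImagesNested f X := htri
  exact hns (hf.surjective_of_range_iterate_subset hlt
    (htri.range_iterate_subset_of_imagePattern_eq hcover hself hlt hpat))

theorem combinatorial_part_ii {α : Type*} (n : ℕ) (hn : 0 < n) (X : Fin n → Set α)
    (hne : ∀ i, (X i).Nonempty)
    (hdisj : ∀ i j, i ≠ j → Disjoint (X i) (X j))
    (hunion : (⋃ i, X i) = Set.univ)
    (f : α → α) (hf : Function.Injective f) (hns : ¬ Function.Surjective f)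
    (htri : ∀ (m : ℕ) (i j : Fin n),
      f^[m] '' X i ∩ X j = ∅ ∨ f^[m] '' X i ⊆ X j ∨ X j ⊆ f^[m] '' X i) :
    ∃ (i : Fin n) (m : ℕ), 0 < m ∧ f^[m] '' X i ⊂ X i :=
  combinatorial_part_ii_general n X hunion f hf hns htri
end
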